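/- One has the minimax characterizations c* = inf{ sup_{t ≥ 0} I(t·u) : u ∈ 𝒟, u ≠ 0 } and m* = inf{ sup_{s,t ≥ 0} I(s·u⁺ + t·u⁻) : u ∈ 𝒟, u⁺ ≠ 0, u⁻ ≠ 0 }. -/

import Mathlib

noncomputable section

open Real Filter Set

namespace DPLap

/-- Forward difference operator. -/
def dlt (u : ℤ → ℝ) (n : ℤ) : ℝ := u (n + 1) - u n

/-- Positive part `u⁺`. -/
def pos (u : ℤ → ℝ) : ℤ → ℝ := fun n => max (u n) 0

/-- Negative part `u⁻`. -/
def neg (u : ℤ → ℝ) : ℤ → ℝ := fun n => min (u n) 0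

/-- Summand of the `E`-norm. -/
def nsum (a b : ℤ → ℝ) (p : ℕ) (u : ℤ → ℝ) (n : ℤ) : ℝ :=
  a n * |dlt u n| ^ p + b n * |u n| ^ p

/-- Membership in the space `E`. -/
def memE (a b : ℤ → ℝ) (p : ℕ) (u : ℤ → ℝ) : Prop :=
  Summable (nsum a b p u)

/-- The norm `‖u‖ = (∑ [a|Δu|^p + b|u|^p])^(1/p)`. -/
def dnorm (a b : ℤ → ℝ) (p : ℕ) (u : ℤ → ℝ) : ℝ :=
  (∑' n : ℤ, nsum a b p u n) ^ ((p : ℝ)⁻¹)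

/-- Summand `c(n)|u(n)|^q ln(|u(n)|^r)` of the logarithmic term (with the
convention `0^q ln 0 = 0`, automatic from `Real.rpow` and `Real.log`). -/
def logSummand (c : ℤ → ℝ) (q r : ℝ) (u : ℤ → ℝ) (n : ℤ) : ℝ :=
  c n * |u n| ^ q * Real.log (|u n| ^ r)

/-- Membership in `𝒟`. -/
def memD (a b c : ℤ → ℝ) (p : ℕ) (q r : ℝ) (u : ℤ → ℝ) : Prop :=
  memE a b p u ∧ Summable (logSummand c q r u)

/-- The energy functional `I`. -/
def En (a b c : ℤ → ℝ) (p : ℕ) (q r : ℝ) (u : ℤ → ℝ) : ℝ :=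
  (1 / (p : ℝ)) * dnorm a b p u ^ p
    + (r / q ^ 2) * ∑' n : ℤ, c n * |u n| ^ q
    - (1 / q) * ∑' n : ℤ, logSummand c q r u n

/-- The pairing `⟨I'(u), v⟩`. -/
def pr (a b c : ℤ → ℝ) (p : ℕ) (q r : ℝ) (u v : ℤ → ℝ) : ℝ :=
  (∑' n : ℤ, (a n * |dlt u n| ^ (p - 2) * dlt u n * dlt v n
      + b n * |u n| ^ (p - 2) * u n * v n))
    - ∑' n : ℤ, c n * |u n| ^ (q - 2) * u n * v n * Real.log (|u n| ^ r)

/-- The Nehari set `𝒩`. -/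
def Nset (a b c : ℤ → ℝ) (p : ℕ) (q r : ℝ) : Set (ℤ → ℝ) :=
  {u | memD a b c p q r u ∧ u ≠ 0 ∧ pr a b c p q r u u = 0}

/-- The sign-changing Nehari set `ℳ`. -/
def Mset (a b c : ℤ → ℝ) (p : ℕ) (q r : ℝ) : Set (ℤ → ℝ) :=
  {u | memD a b c p q r u ∧ pos u ≠ 0 ∧ neg u ≠ 0 ∧
      pr a b c p q r u (pos u) = 0 ∧ pr a b c p q r u (neg u) = 0}

/-- `m* = inf_ℳ I`. -/
def mStar (a b c : ℤ → ℝ) (p : ℕ) (q r : ℝ) : ℝ :=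
  sInf (En a b c p q r '' Mset a b c p q r)

/-- `c* = inf_𝒩 I`. -/
def cStar (a b c : ℤ → ℝ) (p : ℕ) (q r : ℝ) : ℝ :=
  sInf (En a b c p q r '' Nset a b c p q r)

/-!
Along a ray, `I (t u) = fiberMap p q r K A B t` with `K = ‖u‖ ^ p`, `A = ∑ c |u| ^ q` and
`B = ∑ c |u| ^ q ln (|u| ^ r)`. This function of `t ≥ 0` vanishes at `0`, is positive near `0`,
tends to `-∞`, and `⟨I'(t u), t u⟩ = t · fiberMap' t`; when `K = B`, i.e. `u ∈ 𝒩`, its maximum is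
at `t = 1`. So every ray meets `𝒩` at a maximiser of the fibre, while on `𝒩` the fibre maximum
is `I u`; this gives both inequalities for `c*`.

For `m*` write `u = u⁺ + u⁻`. Every term of `I (s u⁺ + t u⁻)` splits into a `u⁺` and a `u⁻`
part except the gradient term, which convexity of `x ↦ x ^ p` bounds by
`s ^ p ∑ a |Δu| ^ (p - 1) |Δu⁺| + t ^ p ∑ a |Δu| ^ (p - 1) |Δu⁻|`, with equality at `s = t = 1`.
The conditions `⟨I'(u), u^±⟩ = 0` say that the two resulting one-variable bounds are maximal at
`1`, so on `ℳ` the fibre is maximal at `(1, 1)`. Conversely a maximiser of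
`(s, t) ↦ I (s u⁺ + t u⁻)` on a large square lies in its interior, and the tangent-line
inequality for `|x| ^ p` turns maximality into the first-order conditions that put
`s u⁺ + t u⁻` into `ℳ`.
-/

open Topology

lemma le_one_of_hasDerivAt {f f' : ℝ → ℝ} (hf : ContinuousOn f (Ici 0))
    (hd : ∀ x, 0 < x → HasDerivAt f (f' x) x) (h₁ : ∀ x ∈ Ioo 0 1, 0 ≤ f' x)
    (h₂ : ∀ x, 1 < x → f' x ≤ 0) {x : ℝ} (hx : 0 ≤ x) : f x ≤ f 1 := by
  rcases le_total x 1 with hx1 | hx1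
  · refine monotoneOn_of_hasDerivWithinAt_nonneg (convex_Icc 0 1)
      (hf.mono Icc_subset_Ici_self) (fun y hy => ?_) (by simpa using h₁) ⟨hx, hx1⟩
      ⟨zero_le_one, le_rfl⟩ hx1
    rw [interior_Icc] at hy
    exact (hd y hy.1).hasDerivWithinAt
  · refine antitoneOn_of_hasDerivWithinAt_nonpos (convex_Ici 1)
      (hf.mono (Ici_subset_Ici.2 zero_le_one)) (fun y hy => ?_) (by simpa using h₂)
      self_mem_Ici hx1 hx1
    rw [interior_Ici] at hy
    exact (hd y (zero_lt_one.trans hy)).hasDerivWithinAt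

lemma hasDerivAt_eq_zero_of_le {P : ℝ → ℝ} {d L s₀ : ℝ} (hP : HasDerivAt P d s₀)
    (hle : ∀ᶠ s in 𝓝 s₀, (s - s₀) * L + P s ≤ P s₀) : L + d = 0 := by
  have hmax : IsLocalMax (fun s => (s - s₀) * L + P s) s₀ := by
    filter_upwards [hle] with s hs
    simpa using hs
  have hD : HasDerivAt (fun s => (s - s₀) * L + P s) (1 * L + d) s₀ :=
    (((hasDerivAt_id' s₀).sub_const s₀).mul_const L).add hP
  simpa using hmax.hasDerivAt_eq_zero hD

section Fiber

variable {p : ℕ} {q r K A B s : ℝ}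

/-- `fiberMap p q r K A B t = I (t u)` when `K = ‖u‖ ^ p`, `A = ∑ c |u| ^ q` and
`B = ∑ c |u| ^ q ln (|u| ^ r)`. -/
def fiberMap (p : ℕ) (q r K A B s : ℝ) : ℝ :=
  s ^ p * K / p + r / q ^ 2 * (s ^ q * A) - s ^ q * (r * log s * A + B) / q

def fiberDeriv (p : ℕ) (q r K A B s : ℝ) : ℝ :=
  s ^ (p - 1) * K - s ^ (q - 1) * (r * log s * A + B)

lemma fiberMap_zero (hp : p ≠ 0) (hq : q ≠ 0) : fiberMap p q r K A B 0 = 0 := by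
  simp [fiberMap, hp, Real.zero_rpow hq]

lemma fiberMap_add (K' : ℝ) :
    fiberMap p q r (K + K') A B s = s ^ p * K' / p + fiberMap p q r K A B s := by
  simp only [fiberMap]; ring

lemma fiberDeriv_one : fiberDeriv p q r K A B 1 = K - B := by
  simp [fiberDeriv]

lemma hasDerivAt_fiberMap (hp : p ≠ 0) (hq : q ≠ 0) (hs : 0 < s) :
    HasDerivAt (fiberMap p q r K A B) (fiberDeriv p q r K A B s) s := by
  have hsq : HasDerivAt (fun s : ℝ => s ^ q) (q * s ^ (q - 1)) s :=
    Real.hasDerivAt_rpow_const (Or.inl hs.ne')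
  have hlog : HasDerivAt (fun s => r * log s * A + B) (r * s⁻¹ * A) s :=
    (((Real.hasDerivAt_log hs.ne').const_mul r).mul_const A).add_const B
  have h : HasDerivAt (fiberMap p q r K A B) (p * s ^ (p - 1) * K / p + r / q ^ 2 *
      (q * s ^ (q - 1) * A) - (q * s ^ (q - 1) * (r * log s * A + B)
        + s ^ q * (r * s⁻¹ * A)) / q) s :=
    ((((hasDerivAt_pow p s).mul_const K).div_const (p : ℝ)).add
      ((hsq.mul_const A).const_mul (r / q ^ 2))).sub ((hsq.mul hlog).div_const q)
  refine h.congr_deriv ?_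
  have hs' : s ^ q * s⁻¹ = s ^ (q - 1) := by
    rw [Real.rpow_sub hs, Real.rpow_one, div_eq_mul_inv]
  have hp' : (p : ℝ) ≠ 0 := Nat.cast_ne_zero.2 hp
  rw [fiberDeriv, ← hs']
  field_simp
  ring

lemma continuousOn_fiberMap (hq : 1 < q) : ContinuousOn (fiberMap p q r K A B) (Ici 0) := by
  have hlog : ContinuousOn (fun s : ℝ => s ^ q * log s) (Ici 0) := by
    refine ((Real.continuous_rpow_const (by linarith : 0 ≤ q - 1)).mul
      Real.continuous_mul_log).continuousOn.congr fun s hs => ?_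
    rcases (mem_Ici.1 hs).eq_or_lt with rfl | hs
    · simp
    · simp only [Pi.mul_apply]
      rw [← mul_assoc, ← Real.rpow_add_one hs.ne', sub_add_cancel]
  have hq0 : Continuous fun s : ℝ => s ^ q := Real.continuous_rpow_const (by linarith)
  have h : fiberMap p q r K A B = fun s =>
      s ^ p * K / p + r / q ^ 2 * (s ^ q * A) - (r * A * (s ^ q * log s) + s ^ q * B) / q := by
    ext s; simp only [fiberMap]; ring
  rw [h]
  fun_prop

/-- Both limits at `0⁺` and at `+∞` come from writing `fiberMap` as `s ^ p` times
`K / p + s ^ (q - p) * (C₁ log s + C₂)`. -/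
lemma fiberMap_eq_mul (hs : 0 < s) :
    fiberMap p q r K A B s = s ^ p * (K / p + s ^ (q - p) *
      (-(r * A / q) * log s + (r / q ^ 2 * A - B / q))) := by
  have h : s ^ q = s ^ p * s ^ (q - p) := by
    rw [← Real.rpow_natCast, ← Real.rpow_add hs, add_sub_cancel]
  simp only [fiberMap, h]
  ring

lemma eventually_fiberMap_pos (hp : p ≠ 0) (hpq : (p : ℝ) < q) (hK : 0 < K) :
    ∀ᶠ s in 𝓝[>] 0, 0 < fiberMap p q r K A B s := by
  have he : 0 < q - p := sub_pos.2 hpq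
  have hpow : Tendsto (fun s : ℝ => s ^ (q - p)) (𝓝[>] 0) (𝓝 0) := by
    simpa [Real.zero_rpow he.ne'] using
      ((Real.continuousAt_rpow_const 0 _ (Or.inr he.le)).tendsto).mono_left nhdsWithin_le_nhds
  have hlog := tendsto_log_mul_rpow_nhdsGT_zero he
  have hlim : Tendsto (fun s : ℝ => K / p + s ^ (q - p) *
      (-(r * A / q) * log s + (r / q ^ 2 * A - B / q))) (𝓝[>] 0) (𝓝 (K / p)) := by
    have h := ((hlog.const_mul (-(r * A / q))).add (hpow.const_mul (r / q ^ 2 * A - B / q)))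
      |>.const_add (K / p)
    simp only [mul_zero, add_zero] at h
    refine h.congr fun s => ?_
    ring
  filter_upwards [hlim.eventually (eventually_gt_nhds (by positivity)), self_mem_nhdsWithin]
    with s hs hs0
  rw [fiberMap_eq_mul hs0]
  exact mul_pos (pow_pos hs0 p) hs

lemma tendsto_fiberMap_atTop (hp : p ≠ 0) (hpq : (p : ℝ) < q) (hr : 0 < r) (hA : 0 < A) :
    Tendsto (fiberMap p q r K A B) atTop atBot := by
  have hq : 0 < q := lt_of_le_of_lt (Nat.cast_nonneg p) hpq
  have hlog : Tendsto (fun s => -(r * A / q) * log s + (r / q ^ 2 * A - B / q)) atTop atBot :=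
    tendsto_atBot_add_const_right _ _
      (Real.tendsto_log_atTop.const_mul_atTop_of_neg (neg_neg_of_pos (by positivity)))
  have h := (tendsto_pow_atTop hp).atTop_mul_atBot₀ (tendsto_atBot_add_const_left _ (K / p)
    ((tendsto_rpow_atTop (sub_pos.2 hpq)).atTop_mul_atBot₀ hlog))
  refine h.congr' ?_
  filter_upwards [eventually_gt_atTop 0] with s hs
  rw [fiberMap_eq_mul hs]

lemma fiberMap_le_fiberMap_one (hp : p ≠ 0) (hpq : (p : ℝ) < q) (hr : 0 ≤ r) (hK : 0 ≤ K)
    (hA : 0 ≤ A) (hs : 0 ≤ s) : fiberMap p q r K A K s ≤ fiberMap p q r K A K 1 := by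
  have hp1 : (1 : ℝ) ≤ p := Nat.one_le_cast.2 (Nat.pos_of_ne_zero hp)
  have hpow (x : ℝ) : x ^ (p - 1) = x ^ ((p : ℝ) - 1) := by
    rw [← Real.rpow_natCast, Nat.cast_sub (Nat.pos_of_ne_zero hp), Nat.cast_one]
  have hrA : 0 ≤ r * A := mul_nonneg hr hA
  refine le_one_of_hasDerivAt (continuousOn_fiberMap (by linarith))
    (fun x hx => hasDerivAt_fiberMap hp (by linarith) hx) (fun x ⟨hx0, hx1⟩ => ?_)
    (fun x hx1 => ?_) hs
  · have h1 : x ^ (q - 1) ≤ x ^ ((p : ℝ) - 1) :=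
      Real.rpow_le_rpow_of_exponent_ge hx0 hx1.le (by linarith)
    have h2 : x ^ (q - 1) * log x ≤ 0 :=
      mul_nonpos_of_nonneg_of_nonpos (by positivity) (Real.log_nonpos hx0.le hx1.le)
    rw [fiberDeriv, hpow]
    nlinarith [mul_nonneg hK (sub_nonneg.2 h1)]
  · have h1 : x ^ ((p : ℝ) - 1) ≤ x ^ (q - 1) :=
      Real.rpow_le_rpow_of_exponent_le hx1.le (by linarith)
    have h2 : 0 ≤ x ^ (q - 1) * log x :=
      mul_nonneg (by positivity) (Real.log_nonneg hx1.le)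
    rw [fiberDeriv, hpow]
    nlinarith [mul_nonneg hK (sub_nonneg.2 h1)]

lemma exists_pos_isMaxOn_fiberMap (hp : p ≠ 0) (hpq : (p : ℝ) < q) (hr : 0 < r) (hK : 0 < K)
    (hA : 0 < A) : ∃ s₀, 0 < s₀ ∧ IsMaxOn (fiberMap p q r K A B) (Ici 0) s₀ := by
  have hp1 : (1 : ℝ) ≤ p := Nat.one_le_cast.2 (Nat.pos_of_ne_zero hp)
  have hcocompact : ∀ᶠ s in cocompact ℝ ⊓ 𝓟 (Ici 0),
      fiberMap p q r K A B s ≤ fiberMap p q r K A B 0 := by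
    rw [cocompact_eq_atBot_atTop, inf_sup_right, (disjoint_atBot_principal_Ici (0 : ℝ)).eq_bot,
      bot_sup_eq]
    exact ((tendsto_fiberMap_atTop hp hpq hr hA).eventually (eventually_le_atBot _)).filter_mono
      inf_le_left
  obtain ⟨s₀, hs₀, hmax⟩ := (continuousOn_fiberMap (by linarith)).exists_isMaxOn'
    isClosed_Ici self_mem_Ici hcocompact
  obtain ⟨s₁, hs₁, hs₁0⟩ := ((eventually_fiberMap_pos hp hpq hK).and self_mem_nhdsWithin).exists
  refine ⟨s₀, (mem_Ici.1 hs₀).lt_of_ne ?_, hmax⟩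
  rintro rfl
  have h := hmax (mem_Ici.2 (le_of_lt hs₁0))
  rw [mem_ofPred_eq, fiberMap_zero hp (by linarith)] at h
  linarith

end Fiber

section Convexity

variable {p : ℕ}

lemma pow_add_mul_sub_le (hp : p ≠ 0) {x y : ℝ} (hx : 0 ≤ x) (hy : 0 ≤ y) :
    x ^ p + p * (x ^ (p - 1) * (y - x)) ≤ y ^ p := by
  rcases hx.eq_or_lt with rfl | hx
  · obtain ⟨k, rfl⟩ := Nat.exists_eq_add_one_of_ne_zero hp
    rcases k with _ | k <;> simp [hy]
  · have h := one_add_mul_le_pow (a := y / x - 1) (by linarith [div_nonneg hy hx.le]) p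
    rw [add_sub_cancel, div_pow] at h
    have hxp : x ^ p = x ^ (p - 1) * x := by
      rw [← pow_succ, Nat.sub_add_cancel (Nat.pos_of_ne_zero hp)]
    rw [le_div_iff₀ (by positivity)] at h
    calc x ^ p + p * (x ^ (p - 1) * (y - x)) = (1 + p * (y / x - 1)) * x ^ p := by
          rw [hxp]; field_simp
      _ ≤ y ^ p := h

lemma abs_pow_sub_two_mul_self (hp : 2 ≤ p) (x : ℝ) : |x| ^ (p - 2) * x * x = |x| ^ p := by
  rw [mul_assoc, ← abs_mul_abs_self x, ← mul_assoc, ← pow_succ, ← pow_succ]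
  congr 1; omega

lemma abs_pow_add_mul_sub_le (hp : 2 ≤ p) (x y : ℝ) :
    |x| ^ p + p * (|x| ^ (p - 2) * x * (y - x)) ≤ |y| ^ p := by
  have hself := abs_pow_sub_two_mul_self hp x
  have hcross : |x| ^ (p - 2) * x * y ≤ |x| ^ (p - 1) * |y| := by
    have h : |x| ^ (p - 2) * (x * y) ≤ |x| ^ (p - 2) * (|x| * |y|) :=
      mul_le_mul_of_nonneg_left ((le_abs_self _).trans (abs_mul x y).le) (by positivity)
    rw [show p - 1 = p - 2 + 1 by omega, pow_succ]
    linarith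
  have h := pow_add_mul_sub_le (by omega : p ≠ 0) (abs_nonneg x) (abs_nonneg y)
  have hxp : |x| ^ (p - 1) * |x| = |x| ^ p := by
    rw [← pow_succ]; congr 1; omega
  nlinarith [Nat.cast_nonneg (α := ℝ) p]

lemma add_mul_pow_le (hp : p ≠ 0) {x y s t : ℝ} (hx : 0 ≤ x) (hy : 0 ≤ y) (hs : 0 ≤ s)
    (ht : 0 ≤ t) : (s * x + t * y) ^ p ≤ (x + y) ^ (p - 1) * (s ^ p * x + t ^ p * y) := by
  rcases (add_nonneg hx hy).eq_or_lt with h0 | h0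
  · obtain ⟨rfl, rfl⟩ : x = 0 ∧ y = 0 := ⟨by linarith, by linarith⟩
    simp [zero_pow hp]
  · have h := (convexOn_pow p).2 (mem_Ici.2 (mul_nonneg hs h0.le))
      (mem_Ici.2 (mul_nonneg ht h0.le)) (div_nonneg hx h0.le) (div_nonneg hy h0.le)
      (by field_simp)
    simp only [smul_eq_mul] at h
    have e1 : x / (x + y) * (s * (x + y)) + y / (x + y) * (t * (x + y)) = s * x + t * y := by
      field_simp
    have e2 : x / (x + y) * (s * (x + y)) ^ p + y / (x + y) * (t * (x + y)) ^ p
        = (x + y) ^ (p - 1) * (s ^ p * x + t ^ p * y) := by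
      rw [mul_pow, mul_pow, ← Nat.sub_add_cancel (Nat.pos_of_ne_zero hp), pow_succ,
        Nat.add_sub_cancel]
      field_simp
      ring
    rwa [e1, e2] at h

end Convexity

lemma abs_rpow_sub_two_mul_self {q : ℝ} (hq : q ≠ 0) (x : ℝ) : |x| ^ (q - 2) * x * x = |x| ^ q := by
  rcases eq_or_ne x 0 with rfl | hx
  · simp [Real.zero_rpow hq]
  · rw [mul_assoc, ← abs_mul_abs_self x, ← sq, ← Real.rpow_natCast, ← Real.rpow_add (abs_pos.2 hx)]
    norm_num

lemma log_abs_rpow (x r : ℝ) : log (|x| ^ r) = r * log |x| := by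
  rcases eq_or_ne x 0 with rfl | hx
  · rcases eq_or_ne r 0 with rfl | hr <;> simp [Real.zero_rpow, *]
  · exact Real.log_rpow (abs_pos.2 hx) r

section Sequences

variable {p : ℕ} {q r : ℝ} {a b c u : ℤ → ℝ} {t : ℝ}

def bSum (b : ℤ → ℝ) (p : ℕ) (u : ℤ → ℝ) : ℝ := ∑' n, b n * |u n| ^ p

def cSum (c : ℤ → ℝ) (q : ℝ) (u : ℤ → ℝ) : ℝ := ∑' n, c n * |u n| ^ q

def logSum (c : ℤ → ℝ) (q r : ℝ) (u : ℤ → ℝ) : ℝ := ∑' n, logSummand c q r u n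

lemma nsum_nonneg (ha : ∀ n, 0 ≤ a n) (hb : ∀ n, 0 ≤ b n) (n : ℤ) : 0 ≤ nsum a b p u n :=
  add_nonneg (mul_nonneg (ha n) (by positivity)) (mul_nonneg (hb n) (by positivity))

lemma dnorm_pow (hp : p ≠ 0) (ha : ∀ n, 0 ≤ a n) (hb : ∀ n, 0 ≤ b n) :
    dnorm a b p u ^ p = ∑' n, nsum a b p u n := by
  rw [dnorm, ← Real.rpow_natCast, ← Real.rpow_mul (tsum_nonneg (nsum_nonneg ha hb)),
    inv_mul_cancel₀ (Nat.cast_ne_zero.2 hp), Real.rpow_one]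

lemma dnorm_pow_pos (hp : p ≠ 0) (ha : ∀ n, 0 ≤ a n) (hb : ∀ n, 0 < b n) (hu : memE a b p u)
    (hne : u ≠ 0) : 0 < dnorm a b p u ^ p := by
  obtain ⟨n, hn⟩ := Function.ne_iff.1 hne
  rw [dnorm_pow hp ha fun n => (hb n).le]
  refine hu.tsum_pos (nsum_nonneg ha fun n => (hb n).le) n ?_
  exact add_pos_of_nonneg_of_pos (mul_nonneg (ha n) (by positivity))
    (mul_pos (hb n) (pow_pos (abs_pos.2 hn) p))

lemma dnorm_pow_nonneg (ha : ∀ n, 0 ≤ a n) (hb : ∀ n, 0 ≤ b n) : 0 ≤ dnorm a b p u ^ p :=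
  pow_nonneg (Real.rpow_nonneg (tsum_nonneg (nsum_nonneg ha hb)) _) _

lemma cSum_nonneg (hc : ∀ n, 0 ≤ c n) : 0 ≤ cSum c q u :=
  tsum_nonneg fun n => mul_nonneg (hc n) (by positivity)

lemma bSum_pos (hb : ∀ n, 0 < b n) (hB : Summable fun n => b n * |u n| ^ p) (hne : u ≠ 0) :
    0 < bSum b p u := by
  obtain ⟨n, hn⟩ := Function.ne_iff.1 hne
  exact hB.tsum_pos (fun n => mul_nonneg (hb n).le (by positivity)) n
    (mul_pos (hb n) (pow_pos (abs_pos.2 hn) p))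

lemma cSum_pos (hc : ∀ n, 0 < c n) (hA : Summable fun n => c n * |u n| ^ q) (hne : u ≠ 0) :
    0 < cSum c q u := by
  obtain ⟨n, hn⟩ := Function.ne_iff.1 hne
  exact hA.tsum_pos (fun n => mul_nonneg (hc n).le (by positivity)) n
    (mul_pos (hc n) (Real.rpow_pos_of_pos (abs_pos.2 hn) q))

/-- Under `b ≥ b₀ > 0` every `u ∈ E` is bounded, so `∑ c |u| ^ q` converges with `∑ c`. -/
lemma summable_c_of_memE (hp : p ≠ 0) (ha : ∀ n, 0 ≤ a n) {b₀ : ℝ} (hb₀ : 0 < b₀)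
    (hbb : ∀ n, b₀ ≤ b n) (hc : ∀ n, 0 ≤ c n) (hcsum : Summable c) (hq : 0 ≤ q)
    (hu : memE a b p u) : Summable fun n => c n * |u n| ^ q := by
  have hb : ∀ n, 0 ≤ b n := fun n => hb₀.le.trans (hbb n)
  set M := ((∑' n, nsum a b p u n) / b₀) ^ (p⁻¹ : ℝ)
  have hM (n : ℤ) : |u n| ≤ M := by
    have h : |u n| ^ p ≤ (∑' n, nsum a b p u n) / b₀ := by
      rw [le_div_iff₀ hb₀]
      calc |u n| ^ p * b₀ ≤ b n * |u n| ^ p := by nlinarith [hbb n, pow_nonneg (abs_nonneg (u n)) p]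
        _ ≤ nsum a b p u n := le_add_of_nonneg_left (mul_nonneg (ha n) (by positivity))
        _ ≤ _ := hu.le_tsum n fun m _ => nsum_nonneg ha hb m
    calc |u n| = (|u n| ^ p) ^ (p⁻¹ : ℝ) := (Real.pow_rpow_inv_natCast (abs_nonneg _) hp).symm
      _ ≤ M := Real.rpow_le_rpow (by positivity) h (by positivity)
  refine (hcsum.mul_right (M ^ q)).of_nonneg_of_le (fun n => mul_nonneg (hc n) (by positivity))
    fun n => mul_le_mul_of_nonneg_left ?_ (hc n)
  exact Real.rpow_le_rpow (abs_nonneg _) (hM n) hq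

lemma summable_a_of_memE (ha : ∀ n, 0 ≤ a n) (hb : ∀ n, 0 ≤ b n) (hu : memE a b p u) :
    Summable fun n => a n * |dlt u n| ^ p :=
  hu.of_nonneg_of_le (fun n => mul_nonneg (ha n) (by positivity))
    fun n => le_add_of_nonneg_right (mul_nonneg (hb n) (by positivity))

lemma summable_b_of_memE (ha : ∀ n, 0 ≤ a n) (hb : ∀ n, 0 ≤ b n) (hu : memE a b p u) :
    Summable fun n => b n * |u n| ^ p :=
  hu.of_nonneg_of_le (fun n => mul_nonneg (hb n) (by positivity))
    fun n => le_add_of_nonneg_left (mul_nonneg (ha n) (by positivity))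

lemma dlt_smul (t : ℝ) (u : ℤ → ℝ) (n : ℤ) : dlt (fun n => t * u n) n = t * dlt u n :=
  (mul_sub t _ _).symm

lemma nsum_smul (ht : 0 ≤ t) (n : ℤ) :
    nsum a b p (fun n => t * u n) n = t ^ p * nsum a b p u n := by
  simp only [nsum, dlt_smul, abs_mul, abs_of_nonneg ht, mul_pow]
  ring

lemma smul_ne_zero_of_ne_zero (ht : t ≠ 0) (hu : u ≠ 0) : (fun n => t * u n) ≠ 0 := by
  obtain ⟨n, hn⟩ := Function.ne_iff.1 hu
  exact Function.ne_iff.2 ⟨n, mul_ne_zero ht hn⟩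

lemma memE_smul (ht : 0 ≤ t) (hu : memE a b p u) : memE a b p (fun n => t * u n) :=
  (hu.mul_left (t ^ p)).congr fun n => (nsum_smul ht n).symm

lemma dnorm_pow_smul (hp : p ≠ 0) (ha : ∀ n, 0 ≤ a n) (hb : ∀ n, 0 ≤ b n) (ht : 0 ≤ t) :
    dnorm a b p (fun n => t * u n) ^ p = t ^ p * dnorm a b p u ^ p := by
  simp only [dnorm_pow hp ha hb, nsum_smul ht, tsum_mul_left]

lemma hasSum_b_smul (ht : 0 ≤ t) (hB : Summable fun n => b n * |u n| ^ p) :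
    HasSum (fun n => b n * |t * u n| ^ p) (t ^ p * bSum b p u) := by
  have h (n : ℤ) : b n * |t * u n| ^ p = t ^ p * (b n * |u n| ^ p) := by
    rw [abs_mul, abs_of_nonneg ht, mul_pow]; ring
  simpa only [h, bSum] using hB.hasSum.mul_left (t ^ p)

lemma hasSum_c_smul (ht : 0 ≤ t) (hA : Summable fun n => c n * |u n| ^ q) :
    HasSum (fun n => c n * |t * u n| ^ q) (t ^ q * cSum c q u) := by
  have h (n : ℤ) : c n * |t * u n| ^ q = t ^ q * (c n * |u n| ^ q) := by
    rw [abs_mul, abs_of_nonneg ht, Real.mul_rpow ht (abs_nonneg _)]; ring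
  simpa only [h, cSum] using hA.hasSum.mul_left (t ^ q)

lemma logSummand_smul (hq : 0 < q) (ht : 0 ≤ t) (n : ℤ) :
    logSummand c q r (fun n => t * u n) n
      = t ^ q * (r * log t * (c n * |u n| ^ q) + logSummand c q r u n) := by
  rw [logSummand, logSummand, log_abs_rpow, log_abs_rpow, abs_mul, abs_of_nonneg ht,
    Real.mul_rpow ht (abs_nonneg _)]
  rcases ht.eq_or_lt with rfl | ht
  · simp [Real.zero_rpow hq.ne']
  rcases eq_or_ne (u n) 0 with hu | hu
  · simp [hu, Real.zero_rpow hq.ne']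
  rw [Real.log_mul ht.ne' (abs_pos.2 hu).ne']
  ring

lemma hasSum_logSummand_smul (hq : 0 < q) (ht : 0 ≤ t)
    (hA : Summable fun n => c n * |u n| ^ q) (hB : Summable (logSummand c q r u)) :
    HasSum (logSummand c q r fun n => t * u n)
      (t ^ q * (r * log t * cSum c q u + logSum c q r u)) := by
  simp only [funext (logSummand_smul hq ht (c := c) (r := r) (u := u))]
  exact (((hA.hasSum.mul_left _)).add hB.hasSum).mul_left _

lemma En_smul (hp : p ≠ 0) (ha : ∀ n, 0 ≤ a n) (hb : ∀ n, 0 ≤ b n) (hq : 0 < q) (ht : 0 ≤ t)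
    (hA : Summable fun n => c n * |u n| ^ q) (hB : Summable (logSummand c q r u)) :
    En a b c p q r (fun n => t * u n)
      = fiberMap p q r (dnorm a b p u ^ p) (cSum c q u) (logSum c q r u) t := by
  rw [En, dnorm_pow_smul hp ha hb ht, (hasSum_c_smul ht hA).tsum_eq,
    (hasSum_logSummand_smul hq ht hA hB).tsum_eq, fiberMap]
  ring

lemma pr_self (hp : 2 ≤ p) (ha : ∀ n, 0 ≤ a n) (hb : ∀ n, 0 ≤ b n) (hq : q ≠ 0) :
    pr a b c p q r u u = dnorm a b p u ^ p - logSum c q r u := by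
  rw [pr, dnorm_pow (by omega) ha hb, logSum]
  congr 1
  · refine tsum_congr fun n => ?_
    rw [nsum, ← abs_pow_sub_two_mul_self hp (dlt u n), ← abs_pow_sub_two_mul_self hp (u n)]
    ring
  · refine tsum_congr fun n => ?_
    rw [logSummand, ← abs_rpow_sub_two_mul_self hq (u n)]
    ring

lemma pr_smul_self (hp : 2 ≤ p) (ha : ∀ n, 0 ≤ a n) (hb : ∀ n, 0 ≤ b n) (hq : 0 < q) (ht : 0 < t)
    (hA : Summable fun n => c n * |u n| ^ q) (hB : Summable (logSummand c q r u)) :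
    pr a b c p q r (fun n => t * u n) (fun n => t * u n)
      = t * fiberDeriv p q r (dnorm a b p u ^ p) (cSum c q u) (logSum c q r u) t := by
  rw [pr_self hp ha hb hq.ne', dnorm_pow_smul (by omega) ha hb ht.le, logSum,
    (hasSum_logSummand_smul hq ht.le hA hB).tsum_eq, fiberDeriv, mul_sub, ← mul_assoc,
    ← mul_assoc, ← pow_succ', Nat.sub_add_cancel (by omega),
    ← Real.rpow_one_add' ht.le (by linarith), add_sub_cancel]

lemma En_zero (hp : p ≠ 0) (hq : q ≠ 0) : En a b c p q r (fun _ => 0) = 0 := by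
  simp [En, dnorm, nsum, dlt, logSummand, hp, Real.zero_rpow hq]

lemma pr_smul_right {v : ℤ → ℝ} : pr a b c p q r u (fun n => t * v n) = t * pr a b c p q r u v := by
  simp only [pr, dlt_smul, mul_sub, ← tsum_mul_left]
  congr 1 <;> exact tsum_congr fun n => by ring

end Sequences

lemma sInf_image_eq_sInf_image_sSup {α : Type*} {S N : Set α} {E : α → ℝ} {F : α → Set ℝ}
    (hS : S.Nonempty) (hF : ∀ u ∈ S, BddAbove (F u) ∧ 0 ∈ F u)
    (hSN : ∀ u ∈ S, ∃ w ∈ N, E w ∈ F u) (hN : ∀ w ∈ N, w ∈ S ∧ IsGreatest (F w) (E w)) :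
    sInf (E '' N) = sInf ((fun u => sSup (F u)) '' S) := by
  have hsup (u) (hu : u ∈ S) : 0 ≤ sSup (F u) := le_csSup (hF u hu).1 (hF u hu).2
  have hE (w) (hw : w ∈ N) : sSup (F w) = E w := (hN w hw).2.csSup_eq
  obtain ⟨u₀, hu₀⟩ := hS
  obtain ⟨w₀, hw₀, -⟩ := hSN u₀ hu₀
  apply le_antisymm
  · have hbdd : BddBelow (E '' N) := ⟨0, by
      rintro _ ⟨w, hw, rfl⟩
      exact hE w hw ▸ hsup w (hN w hw).1⟩
    refine le_csInf ⟨_, u₀, hu₀, rfl⟩ ?_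
    rintro _ ⟨u, hu, rfl⟩
    obtain ⟨w, hw, hwu⟩ := hSN u hu
    exact (csInf_le hbdd ⟨w, hw, rfl⟩).trans (le_csSup (hF u hu).1 hwu)
  · refine le_csInf ⟨_, w₀, hw₀, rfl⟩ ?_
    rintro _ ⟨w, hw, rfl⟩
    rw [← hE w hw]
    exact csInf_le ⟨0, by rintro _ ⟨u, hu, rfl⟩; exact hsup u hu⟩ ⟨w, (hN w hw).1, rfl⟩

section Nehari

variable {p : ℕ} {q r : ℝ} {a b c u : ℤ → ℝ}

lemma memD_of_finite_support (hp : p ≠ 0) (hq : q ≠ 0) (hu : (Function.support u).Finite) :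
    memD a b c p q r u := by
  have hu' : (Function.support fun n => u (n + 1)).Finite :=
    hu.preimage (add_left_injective 1).injOn
  refine ⟨summable_of_hasFiniteSupport ((hu.union hu').subset fun n hn => ?_),
    summable_of_hasFiniteSupport (hu.subset fun n hn => ?_)⟩
  · by_contra h
    simp only [mem_union, Function.mem_support, not_or, not_not] at h
    simp [nsum, dlt, h.1, h.2, hp] at hn
  · by_contra h
    simp [logSummand, Function.notMem_support.1 h, Real.zero_rpow hq] at hn

lemma exists_sign_changing_of_finite_support :
    ∃ u : ℤ → ℝ, (Function.support u).Finite ∧ pos u ≠ 0 ∧ neg u ≠ 0 := by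
  refine ⟨fun n => if n = 0 then 1 else if n = 1 then -1 else 0,
    (Set.toFinite ({0, 1} : Set ℤ)).subset fun n hn => ?_, fun h => ?_, fun h => ?_⟩
  · by_contra h
    simp_all
  · simpa [pos] using congrFun h 0
  · simpa [neg] using congrFun h 1

lemma fiber_eq_image (hp : p ≠ 0) (ha : ∀ n, 0 ≤ a n) (hb : ∀ n, 0 ≤ b n) (hq : 0 < q)
    (hA : Summable fun n => c n * |u n| ^ q) (hB : Summable (logSummand c q r u)) :
    {y | ∃ t : ℝ, 0 ≤ t ∧ y = En a b c p q r (fun n => t * u n)}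
      = fiberMap p q r (dnorm a b p u ^ p) (cSum c q u) (logSum c q r u) '' Ici 0 := by
  ext y
  constructor
  · rintro ⟨t, ht, rfl⟩
    exact ⟨t, ht, (En_smul hp ha hb hq ht hA hB).symm⟩
  · rintro ⟨t, ht, rfl⟩
    exact ⟨t, ht, (En_smul hp ha hb hq ht hA hB).symm⟩

lemma exists_smul_mem_Nset (hp : 2 ≤ p) (hpq : (p : ℝ) < q) (hr : 0 < r) (ha : ∀ n, 0 ≤ a n)
    (hb : ∀ n, 0 < b n) (hc : ∀ n, 0 < c n) (hu : memD a b c p q r u)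
    (hA : Summable fun n => c n * |u n| ^ q) (hne : u ≠ 0) :
    ∃ t, 0 ≤ t ∧ (fun n => t * u n) ∈ Nset a b c p q r := by
  have hq : 0 < q := lt_of_le_of_lt (Nat.cast_nonneg p) hpq
  have hb' : ∀ n, 0 ≤ b n := fun n => (hb n).le
  obtain ⟨t, ht, hmax⟩ := exists_pos_isMaxOn_fiberMap (B := logSum c q r u) (by omega) hpq hr
    (dnorm_pow_pos (by omega) ha hb hu.1 hne) (cSum_pos hc hA hne)
  have hderiv := (hmax.isLocalMax (Ici_mem_nhds ht)).hasDerivAt_eq_zero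
    (hasDerivAt_fiberMap (by omega) hq.ne' ht)
  refine ⟨t, ht.le, ⟨memE_smul ht.le hu.1, (hasSum_logSummand_smul hq ht.le hA hu.2).summable⟩,
    smul_ne_zero_of_ne_zero ht.ne' hne, ?_⟩
  rw [pr_smul_self hp ha hb' hq ht hA hu.2, hderiv, mul_zero]

lemma isGreatest_fiber_of_mem_Nset (hp : 2 ≤ p) (hpq : (p : ℝ) < q) (hr : 0 < r)
    (ha : ∀ n, 0 ≤ a n) (hb : ∀ n, 0 ≤ b n) (hc : ∀ n, 0 ≤ c n) (hu : u ∈ Nset a b c p q r)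
    (hA : Summable fun n => c n * |u n| ^ q) :
    IsGreatest {y | ∃ t : ℝ, 0 ≤ t ∧ y = En a b c p q r (fun n => t * u n)} (En a b c p q r u) := by
  have hq : 0 < q := lt_of_le_of_lt (Nat.cast_nonneg p) hpq
  have hK : dnorm a b p u ^ p = logSum c q r u := sub_eq_zero.1 (pr_self hp ha hb hq.ne' ▸ hu.2.2)
  have hone : En a b c p q r u
      = fiberMap p q r (dnorm a b p u ^ p) (cSum c q u) (logSum c q r u) 1 := by
    simpa using En_smul (by omega) ha hb hq zero_le_one hA hu.1.2 (r := r)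
  rw [fiber_eq_image (by omega) ha hb hq hA hu.1.2, hone, ← hK]
  refine ⟨mem_image_of_mem _ (mem_Ici.2 zero_le_one), ?_⟩
  rintro _ ⟨t, ht, rfl⟩
  exact fiberMap_le_fiberMap_one (by omega) hpq hr.le (dnorm_pow_nonneg ha hb) (cSum_nonneg hc) ht

end Nehari

theorem cStar_eq {p : ℕ} {q r : ℝ} {a b c : ℤ → ℝ} (hp : 2 ≤ p) (hpq : (p : ℝ) < q) (hr : 0 < r)
    (ha : ∀ n, 0 ≤ a n) (hb : ∀ n, 0 < b n) (hc : ∀ n, 0 < c n) {b₀ : ℝ} (hb₀ : 0 < b₀)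
    (hbb : ∀ n, b₀ ≤ b n) (hcsum : Summable c) :
    cStar a b c p q r
      = sInf {x : ℝ | ∃ u : ℤ → ℝ, memD a b c p q r u ∧ u ≠ 0 ∧
          x = sSup {y : ℝ | ∃ t : ℝ, 0 ≤ t ∧ y = En a b c p q r (fun n => t * u n)}} := by
  have hq : 0 < q := lt_of_le_of_lt (Nat.cast_nonneg p) hpq
  have hb' : ∀ n, 0 ≤ b n := fun n => (hb n).le
  have hA {u : ℤ → ℝ} (hu : memE a b p u) : Summable fun n => c n * |u n| ^ q :=
    summable_c_of_memE (by omega) ha hb₀ hbb (fun n => (hc n).le) hcsum hq.le hu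
  have key := sInf_image_eq_sInf_image_sSup (S := {u | memD a b c p q r u ∧ u ≠ 0})
    (N := Nset a b c p q r) (E := En a b c p q r)
    (F := fun u => {y | ∃ t : ℝ, 0 ≤ t ∧ y = En a b c p q r (fun n => t * u n)}) ?_ ?_ ?_ ?_
  · rw [cStar, key]
    congr 1
    ext x
    simp only [mem_image, mem_ofPred_eq, and_assoc, eq_comm]
  · obtain ⟨u, hfin, hpos, -⟩ := exists_sign_changing_of_finite_support
    exact ⟨u, memD_of_finite_support (by omega) hq.ne' hfin,
      fun h => hpos (by ext n; simp [pos, h])⟩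
  · rintro u ⟨hu, hne⟩
    obtain ⟨t, -, hmax⟩ := exists_pos_isMaxOn_fiberMap (B := logSum c q r u) (by omega) hpq hr
      (dnorm_pow_pos (by omega) ha hb hu.1 hne) (cSum_pos hc (hA hu.1) hne)
    rw [fiber_eq_image (by omega) ha hb' hq (hA hu.1) hu.2]
    exact ⟨⟨_, forall_mem_image.2 hmax⟩, 0, self_mem_Ici, fiberMap_zero (by omega) hq.ne'⟩
  · rintro u ⟨hu, hne⟩
    obtain ⟨t, ht, htN⟩ := exists_smul_mem_Nset hp hpq hr ha hb hc hu (hA hu.1) hne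
    exact ⟨_, htN, t, ht, rfl⟩
  · intro w hw
    exact ⟨⟨hw.1, hw.2.1⟩,
      isGreatest_fiber_of_mem_Nset hp hpq hr ha hb' (fun n => (hc n).le) hw (hA hw.1.1)⟩

section Split

variable {p : ℕ} {q r : ℝ} {a b c u v w : ℤ → ℝ} {s t : ℝ}

/-- `u = v + w` with `v`, `w` of disjoint supports and increments of the same sign, as for
`u = u⁺ + u⁻`. -/
structure IsSplit (u v w : ℤ → ℝ) : Prop where
  add_eq : ∀ n, v n + w n = u n
  mul_eq_zero : ∀ n, v n * w n = 0
  dlt_mul_nonneg : ∀ n, 0 ≤ dlt v n * dlt w n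

lemma isSplit_pos_neg (u : ℤ → ℝ) : IsSplit u (pos u) (neg u) where
  add_eq n := by rcases le_total (u n) 0 with h | h <;> simp [pos, neg, h]
  mul_eq_zero n := by rcases le_total (u n) 0 with h | h <;> simp [pos, neg, h]
  dlt_mul_nonneg n := by
    simp only [dlt, pos, neg]
    rcases le_total (u n) 0 with h | h <;> rcases le_total (u (n + 1)) 0 with h' | h' <;>
      simp [h, h'] <;> nlinarith

lemma dlt_comb (n : ℤ) : dlt (fun n => s * v n + t * w n) n = s * dlt v n + t * dlt w n := by
  simp only [dlt]; ring

/-- The coefficient `K` of the fibering map that bounds `s ↦ I (s v + t w)` from above. -/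
def splitK (a b : ℤ → ℝ) (p : ℕ) (u v : ℤ → ℝ) : ℝ :=
  bSum b p v + ∑' n, a n * (|dlt u n| ^ (p - 1) * |dlt v n|)

lemma splitK_nonneg (ha : ∀ n, 0 ≤ a n) (hb : ∀ n, 0 ≤ b n) : 0 ≤ splitK a b p u v :=
  add_nonneg (tsum_nonneg fun n => mul_nonneg (hb n) (by positivity))
    (tsum_nonneg fun n => mul_nonneg (ha n) (by positivity))

namespace IsSplit

variable (h : IsSplit u v w)
include h

lemma symm : IsSplit u w v where
  add_eq n := by rw [add_comm]; exact h.add_eq n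
  mul_eq_zero n := by rw [mul_comm]; exact h.mul_eq_zero n
  dlt_mul_nonneg n := by rw [mul_comm]; exact h.dlt_mul_nonneg n

lemma dlt_add (n : ℤ) : dlt v n + dlt w n = dlt u n := by
  simp only [dlt, ← h.add_eq]; ring

lemma eq_or_eq_zero (n : ℤ) : v n = u n ∨ v n = 0 := by
  rcases _root_.mul_eq_zero.1 (h.mul_eq_zero n) with hv | hw
  · exact Or.inr hv
  · exact Or.inl (by rw [← h.add_eq n, hw, add_zero])

lemma comb_eq_self : (fun n => 1 * v n + 1 * w n) = u := by
  ext n; simp [h.add_eq]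

lemma abs_comb_dlt (hs : 0 ≤ s) (ht : 0 ≤ t) (n : ℤ) :
    |s * dlt v n + t * dlt w n| = s * |dlt v n| + t * |dlt w n| := by
  have hsign : 0 ≤ s * dlt v n * (t * dlt w n) := by
    have := mul_nonneg (mul_nonneg hs ht) (h.dlt_mul_nonneg n)
    linarith [show s * dlt v n * (t * dlt w n) = s * t * (dlt v n * dlt w n) by ring]
  rw [(abs_add_eq_add_abs_iff _ _).2 (mul_nonneg_iff.1 hsign), abs_mul, abs_mul, abs_of_nonneg hs,
    abs_of_nonneg ht]

lemma abs_dlt_add (n : ℤ) : |dlt v n| + |dlt w n| = |dlt u n| := by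
  simpa [h.dlt_add] using (h.abs_comb_dlt zero_le_one zero_le_one n).symm

lemma abs_dlt_le (n : ℤ) : |dlt v n| ≤ |dlt u n| :=
  h.abs_dlt_add n ▸ le_add_of_nonneg_right (abs_nonneg _)

lemma abs_comb_dlt_le (hs : 0 ≤ s) (ht : 0 ≤ t) (n : ℤ) :
    |s * dlt v n + t * dlt w n| ≤ (s + t) * |dlt u n| := by
  rw [h.abs_comb_dlt hs ht, add_mul]
  exact add_le_add (mul_le_mul_of_nonneg_left (h.abs_dlt_le n) hs)
    (mul_le_mul_of_nonneg_left (h.symm.abs_dlt_le n) ht)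

lemma apply_comb {F : ℝ → ℝ} (hF : F 0 = 0) (n : ℤ) :
    F (s * v n + t * w n) = F (s * v n) + F (t * w n) := by
  rcases _root_.mul_eq_zero.1 (h.mul_eq_zero n) with hv | hw <;> simp [*]

lemma summable_left {G : ℤ → ℝ → ℝ} (hG : ∀ n, G n 0 = 0) (hu : Summable fun n => G n (u n)) :
    Summable fun n => G n (v n) :=
  hu.abs.of_norm_bounded fun n => by rcases h.eq_or_eq_zero n with hv | hv <;> simp [hv, hG]

lemma summable_c_left (hq : q ≠ 0) (hA : Summable fun n => c n * |u n| ^ q) :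
    Summable fun n => c n * |v n| ^ q :=
  h.summable_left (G := fun n x => c n * |x| ^ q) (by simp [Real.zero_rpow hq]) hA

lemma memE_left (ha : ∀ n, 0 ≤ a n) (hb : ∀ n, 0 ≤ b n) (hu : memE a b p u) : memE a b p v := by
  refine hu.of_nonneg_of_le (nsum_nonneg ha hb) fun n => ?_
  have habs : |v n| ≤ |u n| := by rcases h.eq_or_eq_zero n with hv | hv <;> simp [hv]
  exact add_le_add (mul_le_mul_of_nonneg_left (pow_le_pow_left₀ (abs_nonneg _) (h.abs_dlt_le n) p)
    (ha n)) (mul_le_mul_of_nonneg_left (pow_le_pow_left₀ (abs_nonneg _) habs p) (hb n))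

lemma memD_left (ha : ∀ n, 0 ≤ a n) (hb : ∀ n, 0 ≤ b n) (hq : q ≠ 0) (hu : memD a b c p q r u) :
    memD a b c p q r v :=
  ⟨h.memE_left ha hb hu.1, h.summable_left (G := fun n x => c n * |x| ^ q * log (|x| ^ r))
    (by simp [Real.zero_rpow hq]) hu.2⟩

lemma summable_kinetic (ha : ∀ n, 0 ≤ a n) (hb : ∀ n, 0 ≤ b n) (hs : 0 ≤ s) (ht : 0 ≤ t)
    (hu : memE a b p u) : Summable fun n => a n * |s * dlt v n + t * dlt w n| ^ p := by
  refine ((summable_a_of_memE ha hb hu).mul_left ((s + t) ^ p)).of_nonneg_of_le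
    (fun n => mul_nonneg (ha n) (by positivity)) fun n => ?_
  calc a n * |s * dlt v n + t * dlt w n| ^ p ≤ a n * ((s + t) * |dlt u n|) ^ p :=
        mul_le_mul_of_nonneg_left (pow_le_pow_left₀ (abs_nonneg _) (h.abs_comb_dlt_le hs ht n) p)
          (ha n)
    _ = (s + t) ^ p * (a n * |dlt u n| ^ p) := by rw [mul_pow]; ring

lemma hasSum_nsum_comb (hp : p ≠ 0) (ha : ∀ n, 0 ≤ a n) (hb : ∀ n, 0 ≤ b n) (hs : 0 ≤ s)
    (ht : 0 ≤ t) (hu : memE a b p u) :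
    HasSum (nsum a b p fun n => s * v n + t * w n)
      (∑' n, a n * |s * dlt v n + t * dlt w n| ^ p
        + (s ^ p * bSum b p v + t ^ p * bSum b p w)) := by
  have hB := (hasSum_b_smul hs (summable_b_of_memE ha hb (h.memE_left ha hb hu))).add
    (hasSum_b_smul ht (summable_b_of_memE ha hb (h.symm.memE_left ha hb hu)))
  have hN := (h.summable_kinetic ha hb hs ht hu).hasSum.add hB
  refine hN.congr_fun fun n => ?_
  simp only [nsum, dlt_comb, h.apply_comb (F := fun x => b n * |x| ^ p) (by simp [hp])]

lemma hasSum_c_comb (hs : 0 ≤ s) (ht : 0 ≤ t) (hq : q ≠ 0)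
    (hA : Summable fun n => c n * |u n| ^ q) :
    HasSum (fun n => c n * |s * v n + t * w n| ^ q) (s ^ q * cSum c q v + t ^ q * cSum c q w) :=
  ((hasSum_c_smul hs (h.summable_c_left hq hA)).add
    (hasSum_c_smul ht (h.symm.summable_c_left hq hA))).congr_fun fun n =>
      h.apply_comb (F := fun x => c n * |x| ^ q) (by simp [Real.zero_rpow hq]) n

lemma hasSum_logSummand_comb (ha : ∀ n, 0 ≤ a n) (hb : ∀ n, 0 ≤ b n) (hs : 0 ≤ s) (ht : 0 ≤ t)
    (hq : 0 < q) (hu : memD a b c p q r u) (hA : Summable fun n => c n * |u n| ^ q) :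
    HasSum (logSummand c q r fun n => s * v n + t * w n)
      (s ^ q * (r * log s * cSum c q v + logSum c q r v)
        + t ^ q * (r * log t * cSum c q w + logSum c q r w)) :=
  ((hasSum_logSummand_smul hq hs (h.summable_c_left hq.ne' hA) (h.memD_left ha hb hq.ne' hu).2).add
    (hasSum_logSummand_smul hq ht (h.symm.summable_c_left hq.ne' hA)
      (h.symm.memD_left ha hb hq.ne' hu).2)).congr_fun fun n =>
    h.apply_comb (F := fun x => c n * |x| ^ q * log (|x| ^ r)) (by simp [Real.zero_rpow hq.ne']) n

lemma memD_comb (hp : p ≠ 0) (ha : ∀ n, 0 ≤ a n) (hb : ∀ n, 0 ≤ b n) (hs : 0 ≤ s) (ht : 0 ≤ t)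
    (hq : 0 < q) (hu : memD a b c p q r u) (hA : Summable fun n => c n * |u n| ^ q) :
    memD a b c p q r (fun n => s * v n + t * w n) :=
  ⟨(h.hasSum_nsum_comb hp ha hb hs ht hu.1).summable,
    (h.hasSum_logSummand_comb ha hb hs ht hq hu hA).summable⟩

lemma En_comb (hp : p ≠ 0) (ha : ∀ n, 0 ≤ a n) (hb : ∀ n, 0 ≤ b n) (hs : 0 ≤ s) (ht : 0 ≤ t)
    (hq : 0 < q) (hu : memD a b c p q r u) (hA : Summable fun n => c n * |u n| ^ q) :
    En a b c p q r (fun n => s * v n + t * w n)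
      = (∑' n, a n * |s * dlt v n + t * dlt w n| ^ p) / p
        + fiberMap p q r (bSum b p v) (cSum c q v) (logSum c q r v) s
        + fiberMap p q r (bSum b p w) (cSum c q w) (logSum c q r w) t := by
  rw [En, dnorm_pow hp ha hb, (h.hasSum_nsum_comb hp ha hb hs ht hu.1).tsum_eq,
    (h.hasSum_c_comb hs ht hq.ne' hA).tsum_eq,
    (h.hasSum_logSummand_comb ha hb hs ht hq hu hA).tsum_eq]
  simp only [fiberMap]
  ring

lemma summable_a_mul_abs_dlt (hp : p ≠ 0) (ha : ∀ n, 0 ≤ a n) (hb : ∀ n, 0 ≤ b n)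
    (hu : memE a b p u) : Summable fun n => a n * (|dlt u n| ^ (p - 1) * |dlt v n|) := by
  refine (summable_a_of_memE ha hb hu).of_nonneg_of_le
    (fun n => mul_nonneg (ha n) (by positivity)) fun n => mul_le_mul_of_nonneg_left ?_ (ha n)
  calc |dlt u n| ^ (p - 1) * |dlt v n| ≤ |dlt u n| ^ (p - 1) * |dlt u n| :=
        mul_le_mul_of_nonneg_left (h.abs_dlt_le n) (by positivity)
    _ = |dlt u n| ^ p := by rw [← pow_succ, Nat.sub_add_cancel (Nat.pos_of_ne_zero hp)]

lemma kinetic_comb_le (hp : p ≠ 0) (ha : ∀ n, 0 ≤ a n) (hb : ∀ n, 0 ≤ b n) (hs : 0 ≤ s)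
    (ht : 0 ≤ t) (hu : memE a b p u) :
    ∑' n, a n * |s * dlt v n + t * dlt w n| ^ p
      ≤ s ^ p * ∑' n, a n * (|dlt u n| ^ (p - 1) * |dlt v n|)
        + t ^ p * ∑' n, a n * (|dlt u n| ^ (p - 1) * |dlt w n|) := by
  have hv := h.summable_a_mul_abs_dlt hp ha hb hu
  have hw := h.symm.summable_a_mul_abs_dlt hp ha hb hu
  rw [← tsum_mul_left, ← tsum_mul_left, ← (hv.mul_left _).tsum_add (hw.mul_left _)]
  refine (h.summable_kinetic ha hb hs ht hu).tsum_le_tsum (fun n => ?_) ((hv.mul_left _).add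
    (hw.mul_left _))
  have hpow := add_mul_pow_le hp (abs_nonneg (dlt v n)) (abs_nonneg (dlt w n)) hs ht
  rw [← h.abs_comb_dlt hs ht, h.abs_dlt_add] at hpow
  calc a n * |s * dlt v n + t * dlt w n| ^ p
      ≤ a n * (|dlt u n| ^ (p - 1) * (s ^ p * |dlt v n| + t ^ p * |dlt w n|)) :=
        mul_le_mul_of_nonneg_left hpow (ha n)
    _ = _ := by ring

lemma kinetic_eq (hp : p ≠ 0) (ha : ∀ n, 0 ≤ a n) (hb : ∀ n, 0 ≤ b n) (hu : memE a b p u) :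
    ∑' n, a n * |dlt u n| ^ p
      = ∑' n, a n * (|dlt u n| ^ (p - 1) * |dlt v n|)
        + ∑' n, a n * (|dlt u n| ^ (p - 1) * |dlt w n|) := by
  rw [← (h.summable_a_mul_abs_dlt hp ha hb hu).tsum_add (h.symm.summable_a_mul_abs_dlt hp ha hb hu)]
  refine tsum_congr fun n => ?_
  rw [← mul_add, ← mul_add, h.abs_dlt_add, ← pow_succ, Nat.sub_add_cancel (Nat.pos_of_ne_zero hp)]

lemma En_comb_le (hp : p ≠ 0) (ha : ∀ n, 0 ≤ a n) (hb : ∀ n, 0 ≤ b n) (hs : 0 ≤ s) (ht : 0 ≤ t)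
    (hq : 0 < q) (hu : memD a b c p q r u) (hA : Summable fun n => c n * |u n| ^ q) :
    En a b c p q r (fun n => s * v n + t * w n)
      ≤ fiberMap p q r (splitK a b p u v) (cSum c q v) (logSum c q r v) s
        + fiberMap p q r (splitK a b p u w) (cSum c q w) (logSum c q r w) t := by
  rw [h.En_comb hp ha hb hs ht hq hu hA, splitK, splitK, fiberMap_add, fiberMap_add]
  have h₁ := div_le_div_of_nonneg_right (h.kinetic_comb_le hp ha hb hs ht hu.1)
    (Nat.cast_nonneg (α := ℝ) p)
  rw [add_div] at h₁
  linarith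

lemma En_eq_fiberMap_one (hp : p ≠ 0) (ha : ∀ n, 0 ≤ a n) (hb : ∀ n, 0 ≤ b n) (hq : 0 < q)
    (hu : memD a b c p q r u) (hA : Summable fun n => c n * |u n| ^ q) :
    En a b c p q r u
      = fiberMap p q r (splitK a b p u v) (cSum c q v) (logSum c q r v) 1
        + fiberMap p q r (splitK a b p u w) (cSum c q w) (logSum c q r w) 1 := by
  have h₁ := h.En_comb hp ha hb zero_le_one zero_le_one hq hu hA
  rw [h.comb_eq_self] at h₁
  simp only [one_mul, h.dlt_add] at h₁
  rw [h₁, splitK, splitK, fiberMap_add, fiberMap_add, h.kinetic_eq hp ha hb hu.1]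
  simp only [one_pow, one_mul]
  ring

lemma summable_pr_kinetic (hp : 2 ≤ p) (ha : ∀ n, 0 ≤ a n) (hb : ∀ n, 0 ≤ b n) (hs : 0 ≤ s)
    (ht : 0 ≤ t) (hu : memE a b p u) :
    Summable fun n => a n * |s * dlt v n + t * dlt w n| ^ (p - 2) * (s * dlt v n + t * dlt w n)
      * dlt v n := by
  refine ((summable_a_of_memE ha hb hu).mul_left ((s + t) ^ (p - 1))).of_norm_bounded fun n => ?_
  have hpow (x : ℝ) : |x| ^ (p - 2) * |x| = |x| ^ (p - 1) := by
    rw [← pow_succ]; congr 1; omega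
  calc ‖a n * |s * dlt v n + t * dlt w n| ^ (p - 2) * (s * dlt v n + t * dlt w n) * dlt v n‖
      = a n * (|s * dlt v n + t * dlt w n| ^ (p - 1) * |dlt v n|) := by
        simp only [Real.norm_eq_abs, abs_mul, abs_abs, abs_pow, abs_of_nonneg (ha n), ← hpow]
        ring
    _ ≤ a n * (((s + t) * |dlt u n|) ^ (p - 1) * |dlt u n|) :=
        mul_le_mul_of_nonneg_left (mul_le_mul (pow_le_pow_left₀ (abs_nonneg _)
          (h.abs_comb_dlt_le hs ht n) _) (h.abs_dlt_le n) (abs_nonneg _) (by positivity)) (ha n)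
    _ = (s + t) ^ (p - 1) * (a n * |dlt u n| ^ p) := by
        rw [mul_pow, mul_assoc, ← pow_succ, Nat.sub_add_cancel (by omega)]
        ring

lemma pr_comb (hp : 2 ≤ p) (ha : ∀ n, 0 ≤ a n) (hb : ∀ n, 0 ≤ b n) (hs : 0 < s) (ht : 0 ≤ t)
    (hq : 0 < q) (hu : memD a b c p q r u) (hA : Summable fun n => c n * |u n| ^ q) :
    pr a b c p q r (fun n => s * v n + t * w n) v
      = ∑' n, a n * |s * dlt v n + t * dlt w n| ^ (p - 2) * (s * dlt v n + t * dlt w n) * dlt v n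
        + fiberDeriv p q r (bSum b p v) (cSum c q v) (logSum c q r v) s := by
  have hv := h.memD_left ha hb hq.ne' hu
  have hw_of (n : ℤ) (hvn : v n ≠ 0) : w n = 0 :=
    (_root_.mul_eq_zero.1 (h.mul_eq_zero n)).resolve_left hvn
  have hB : HasSum (fun n => b n * |s * v n + t * w n| ^ (p - 2) * (s * v n + t * w n) * v n)
      (s ^ (p - 1) * bSum b p v) := by
    refine ((summable_b_of_memE ha hb hv.1).hasSum.mul_left _).congr_fun fun n => ?_
    rcases eq_or_ne (v n) 0 with hvn | hvn
    · simp [hvn, zero_pow (by omega : p ≠ 0)]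
    · rw [hw_of n hvn, mul_zero, add_zero, abs_mul, abs_of_pos hs, mul_pow,
        ← abs_pow_sub_two_mul_self hp (v n), show p - 1 = p - 2 + 1 by omega, pow_succ]
      ring
  have hC : HasSum (fun n => c n * |s * v n + t * w n| ^ (q - 2) * (s * v n + t * w n) * v n
      * log (|s * v n + t * w n| ^ r))
      (s ^ (q - 1) * (r * log s * cSum c q v + logSum c q r v)) := by
    refine ((((h.summable_c_left hq.ne' hA).hasSum.mul_left (r * log s)).add
      hv.2.hasSum).mul_left _).congr_fun fun n => ?_
    rcases eq_or_ne (v n) 0 with hvn | hvn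
    · simp [hvn, logSummand, Real.zero_rpow hq.ne']
    · have hs' : s ^ (q - 1) = s ^ (q - 2) * s := by
        rw [← Real.rpow_add_one hs.ne']; congr 1; ring
      rw [hw_of n hvn, mul_zero, add_zero, logSummand, log_abs_rpow, log_abs_rpow, abs_mul,
        abs_of_pos hs, Real.mul_rpow hs.le (abs_nonneg _), Real.log_mul hs.ne' (abs_pos.2 hvn).ne',
        ← abs_rpow_sub_two_mul_self hq.ne' (v n), hs']
      ring
  rw [pr]
  simp only [dlt_comb]
  rw [((h.summable_pr_kinetic hp ha hb hs.le ht hu.1).hasSum.add hB).tsum_eq, hC.tsum_eq,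
    fiberDeriv]
  ring

lemma pr_eq (hp : 2 ≤ p) (ha : ∀ n, 0 ≤ a n) (hb : ∀ n, 0 ≤ b n) (hq : 0 < q)
    (hu : memD a b c p q r u) (hA : Summable fun n => c n * |u n| ^ q) :
    pr a b c p q r u v = splitK a b p u v - logSum c q r v := by
  have h₁ := h.pr_comb hp ha hb one_pos zero_le_one hq hu hA
  rw [h.comb_eq_self] at h₁
  simp only [one_mul, h.dlt_add, fiberDeriv_one] at h₁
  have ha' (n : ℤ) : a n * |dlt u n| ^ (p - 2) * dlt u n * dlt v n
      = a n * (|dlt u n| ^ (p - 1) * |dlt v n|) := by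
    have hnn : 0 ≤ dlt u n * dlt v n := by
      rw [← h.dlt_add]; nlinarith [h.dlt_mul_nonneg n, sq_nonneg (dlt v n)]
    rw [mul_assoc (a n * _), ← abs_of_nonneg hnn, abs_mul, show p - 1 = p - 2 + 1 by omega,
      pow_succ]
    ring
  rw [h₁, tsum_congr ha', splitK]
  ring

lemma kinetic_tangent (hp : 2 ≤ p) (ha : ∀ n, 0 ≤ a n) (hb : ∀ n, 0 ≤ b n) {s₀ : ℝ}
    (hs₀ : 0 ≤ s₀) (hs : 0 ≤ s) (ht : 0 ≤ t) (hu : memE a b p u) :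
    ∑' n, a n * |s₀ * dlt v n + t * dlt w n| ^ p + p * (s - s₀) * ∑' n, a n
        * |s₀ * dlt v n + t * dlt w n| ^ (p - 2) * (s₀ * dlt v n + t * dlt w n) * dlt v n
      ≤ ∑' n, a n * |s * dlt v n + t * dlt w n| ^ p := by
  have hL := (h.summable_pr_kinetic hp ha hb hs₀ ht hu).mul_left (p * (s - s₀))
  rw [← tsum_mul_left, ← (h.summable_kinetic ha hb hs₀ ht hu).tsum_add hL]
  refine ((h.summable_kinetic ha hb hs₀ ht hu).add hL).tsum_le_tsum (fun n => ?_)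
    (h.summable_kinetic ha hb hs ht hu)
  have := mul_le_mul_of_nonneg_left (abs_pow_add_mul_sub_le hp (s₀ * dlt v n + t * dlt w n)
    (s * dlt v n + t * dlt w n)) (ha n)
  linear_combination this

lemma continuousOn_En_comb (hp : p ≠ 0) (hpq : (p : ℝ) < q) (ha : ∀ n, 0 ≤ a n)
    (hb : ∀ n, 0 ≤ b n) (hu : memD a b c p q r u) (hA : Summable fun n => c n * |u n| ^ q) (R : ℝ) :
    ContinuousOn (fun x : ℝ × ℝ => En a b c p q r fun n => x.1 * v n + x.2 * w n)
      (Icc 0 R ×ˢ Icc 0 R) := by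
  have hq : 1 < q := lt_of_le_of_lt (Nat.one_le_cast.2 (Nat.pos_of_ne_zero hp)) hpq
  have hkin : ContinuousOn (fun x : ℝ × ℝ => ∑' n, a n * |x.1 * dlt v n + x.2 * dlt w n| ^ p)
      (Icc 0 R ×ˢ Icc 0 R) := by
    refine continuousOn_tsum (fun n => by fun_prop)
      ((summable_a_of_memE ha hb hu.1).mul_left ((R + R) ^ p)) fun n x ⟨⟨hs, hsR⟩, ⟨ht, htR⟩⟩ => ?_
    rw [Real.norm_of_nonneg (mul_nonneg (ha n) (by positivity)), ← mul_assoc, mul_comm _ (a n),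
      mul_assoc, ← mul_pow]
    exact mul_le_mul_of_nonneg_left (pow_le_pow_left₀ (abs_nonneg _)
      ((h.abs_comb_dlt_le hs ht n).trans (by gcongr)) p) (ha n)
  refine ContinuousOn.congr ?_ fun x hx => h.En_comb hp ha hb hx.1.1 hx.2.1 (by linarith) hu hA
  exact ((hkin.div_const _).add ((continuousOn_fiberMap hq).comp continuousOn_fst
    fun x hx => hx.1.1)).add ((continuousOn_fiberMap hq).comp continuousOn_snd fun x hx => hx.2.1)

lemma exists_isMaxOn_fiberMap_splitK (hp : p ≠ 0) (hpq : (p : ℝ) < q) (hr : 0 < r)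
    (ha : ∀ n, 0 ≤ a n) (hb : ∀ n, 0 < b n) (hc : ∀ n, 0 < c n) (hu : memE a b p u)
    (hA : Summable fun n => c n * |u n| ^ q) (hv : v ≠ 0) :
    ∃ s₁, IsMaxOn (fiberMap p q r (splitK a b p u v) (cSum c q v) (logSum c q r v)) (Ici 0) s₁ := by
  have hq : q ≠ 0 := (lt_of_le_of_lt (Nat.cast_nonneg p) hpq).ne'
  have hb' : ∀ n, 0 ≤ b n := fun n => (hb n).le
  have hK : 0 < splitK a b p u v :=
    add_pos_of_pos_of_nonneg (bSum_pos hb (summable_b_of_memE ha hb' (h.memE_left ha hb' hu)) hv)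
      (tsum_nonneg fun n => mul_nonneg (ha n) (by positivity))
  obtain ⟨s₁, -, hs₁⟩ :=
    exists_pos_isMaxOn_fiberMap hp hpq hr hK (cSum_pos hc (h.summable_c_left hq hA) hv)
  exact ⟨s₁, hs₁⟩

lemma exists_En_comb_neg (hp : p ≠ 0) (hpq : (p : ℝ) < q) (hr : 0 < r) (ha : ∀ n, 0 ≤ a n)
    (hb : ∀ n, 0 < b n) (hc : ∀ n, 0 < c n) (hu : memD a b c p q r u)
    (hA : Summable fun n => c n * |u n| ^ q) (hv : v ≠ 0) (hw : w ≠ 0) :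
    ∃ R, 0 < R ∧ ∀ t, 0 ≤ t → En a b c p q r (fun n => R * v n + t * w n) < 0
      ∧ En a b c p q r (fun n => t * v n + R * w n) < 0 := by
  have hq : 0 < q := lt_of_le_of_lt (Nat.cast_nonneg p) hpq
  have hb' : ∀ n, 0 ≤ b n := fun n => (hb n).le
  obtain ⟨s₁, hs₁⟩ := h.exists_isMaxOn_fiberMap_splitK hp hpq hr ha hb hc hu.1 hA hv
  obtain ⟨t₁, ht₁⟩ := h.symm.exists_isMaxOn_fiberMap_splitK hp hpq hr ha hb hc hu.1 hA hw
  obtain ⟨R, ⟨hRv, hRw⟩, hR⟩ := ((((tendsto_fiberMap_atTop (K := splitK a b p u v)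
    (B := logSum c q r v) hp hpq hr (cSum_pos hc (h.summable_c_left hq.ne' hA) hv)).eventually
      (eventually_lt_atBot
        (-fiberMap p q r (splitK a b p u w) (cSum c q w) (logSum c q r w) t₁))).and
    ((tendsto_fiberMap_atTop (K := splitK a b p u w) (B := logSum c q r w) hp hpq hr
      (cSum_pos hc (h.symm.summable_c_left hq.ne' hA) hw)).eventually (eventually_lt_atBot
        (-fiberMap p q r (splitK a b p u v) (cSum c q v) (logSum c q r v) s₁)))).and
    (eventually_gt_atTop 0)).exists
  refine ⟨R, hR, fun t ht => ⟨?_, ?_⟩⟩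
  · refine (h.En_comb_le hp ha hb' hR.le ht hq hu hA).trans_lt ?_
    linarith [isMaxOn_iff.1 ht₁ t ht]
  · refine (h.En_comb_le hp ha hb' ht hR.le hq hu hA).trans_lt ?_
    linarith [isMaxOn_iff.1 hs₁ t ht]

lemma pr_eq_zero_of_isMaxOn (hp : 2 ≤ p) (hpq : (p : ℝ) < q) (ha : ∀ n, 0 ≤ a n)
    (hb : ∀ n, 0 < b n) (hu : memD a b c p q r u) (hA : Summable fun n => c n * |u n| ^ q)
    (hv : v ≠ 0) {R s₀ t₀ : ℝ} (hR : 0 < R) (hs₀ : s₀ ∈ Icc 0 R) (ht₀ : t₀ ∈ Icc 0 R)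
    (hmax : ∀ s ∈ Icc 0 R, ∀ t ∈ Icc 0 R,
      En a b c p q r (fun n => s * v n + t * w n) ≤ En a b c p q r (fun n => s₀ * v n + t₀ * w n))
    (hneg : ∀ t ∈ Icc 0 R, En a b c p q r (fun n => R * v n + t * w n) < 0) :
    0 < s₀ ∧ pr a b c p q r (fun n => s₀ * v n + t₀ * w n) v = 0 := by
  have hp0 : p ≠ 0 := by omega
  have hp' : (0 : ℝ) < p := by exact_mod_cast hp0.bot_lt
  have hq : 0 < q := lt_of_le_of_lt (Nat.cast_nonneg p) hpq
  have hb' : ∀ n, 0 ≤ b n := fun n => (hb n).le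
  have hG {s : ℝ} (hs : 0 ≤ s) := h.En_comb hp0 ha hb' hs ht₀.1 hq hu hA (r := r)
  have hpos : 0 < s₀ := by
    refine hs₀.1.lt_of_ne fun h0 => ?_
    subst h0
    have hK := bSum_pos hb (summable_b_of_memE ha hb' (h.memE_left ha hb' hu.1)) hv
    obtain ⟨s₁, hPs₁, hs₁⟩ := ((eventually_fiberMap_pos (A := cSum c q v) (B := logSum c q r v)
      (r := r) hp0 hpq hK).and (Ioo_mem_nhdsGT hR)).exists
    have hkin : ∑' n, a n * |0 * dlt v n + t₀ * dlt w n| ^ p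
        ≤ ∑' n, a n * |s₁ * dlt v n + t₀ * dlt w n| ^ p := by
      refine (h.summable_kinetic ha hb' le_rfl ht₀.1 hu.1).tsum_le_tsum (fun n => ?_)
        (h.summable_kinetic ha hb' hs₁.1.le ht₀.1 hu.1)
      rw [h.abs_comb_dlt le_rfl ht₀.1, h.abs_comb_dlt hs₁.1.le ht₀.1]
      refine mul_le_mul_of_nonneg_left (pow_le_pow_left₀ ?_ ?_ p) (ha n)
      · exact add_nonneg (by simp) (mul_nonneg ht₀.1 (abs_nonneg _))
      · exact add_le_add (mul_le_mul_of_nonneg_right hs₁.1.le (abs_nonneg _)) le_rfl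
    have h₁ := hmax s₁ ⟨hs₁.1.le, hs₁.2.le⟩ t₀ ht₀
    rw [hG hs₁.1.le, hG le_rfl, fiberMap_zero hp0 hq.ne'] at h₁
    have h₂ := div_le_div_of_nonneg_right hkin hp'.le
    linarith
  have hltR : s₀ < R := by
    refine hs₀.2.lt_of_ne fun hR' => ?_
    have h₀₀ := hmax 0 ⟨le_rfl, hR.le⟩ 0 ⟨le_rfl, hR.le⟩
    simp only [zero_mul, add_zero] at h₀₀
    rw [En_zero hp0 hq.ne', hR'] at h₀₀
    linarith [hneg t₀ ht₀]
  refine ⟨hpos, ?_⟩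
  rw [h.pr_comb hp ha hb' hpos ht₀.1 hq hu hA]
  refine hasDerivAt_eq_zero_of_le (hasDerivAt_fiberMap hp0 hq.ne' hpos) ?_
  filter_upwards [Ioo_mem_nhds hpos hltR] with s hs
  have h₁ := hmax s ⟨hs.1.le, hs.2.le⟩ t₀ ht₀
  rw [hG hs.1.le, hG hs₀.1] at h₁
  have h₂ := h.kinetic_tangent hp ha hb' hs₀.1 hs.1.le ht₀.1 hu.1
  have h₃ : (s - s₀) * ∑' n, a n * |s₀ * dlt v n + t₀ * dlt w n| ^ (p - 2)
        * (s₀ * dlt v n + t₀ * dlt w n) * dlt v n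
      ≤ (∑' n, a n * |s * dlt v n + t₀ * dlt w n| ^ p) / p
        - (∑' n, a n * |s₀ * dlt v n + t₀ * dlt w n| ^ p) / p := by
    rw [← sub_div, le_div_iff₀ hp']
    linarith
  linarith

end IsSplit

end Split

section SignChanging

variable {p : ℕ} {q r : ℝ} {a b c u : ℤ → ℝ} {s t : ℝ}

lemma pos_comb (hs : 0 ≤ s) (ht : 0 ≤ t) :
    pos (fun n => s * pos u n + t * neg u n) = fun n => s * pos u n := by
  ext n
  rcases le_total (u n) 0 with h | h
  · simp [pos, neg, h, mul_nonpos_of_nonneg_of_nonpos ht h]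
  · simp [pos, neg, h, mul_nonneg hs h]

lemma neg_comb (hs : 0 ≤ s) (ht : 0 ≤ t) :
    neg (fun n => s * pos u n + t * neg u n) = fun n => t * neg u n := by
  ext n
  rcases le_total (u n) 0 with h | h
  · simp [pos, neg, h, mul_nonpos_of_nonneg_of_nonpos ht h]
  · simp [pos, neg, h, mul_nonneg hs h]

lemma exists_comb_mem_Mset (hp : 2 ≤ p) (hpq : (p : ℝ) < q) (hr : 0 < r) (ha : ∀ n, 0 ≤ a n)
    (hb : ∀ n, 0 < b n) (hc : ∀ n, 0 < c n) (hu : memD a b c p q r u)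
    (hA : Summable fun n => c n * |u n| ^ q) (hpos : pos u ≠ 0) (hneg : neg u ≠ 0) :
    ∃ s t, 0 ≤ s ∧ 0 ≤ t ∧ (fun n => s * pos u n + t * neg u n) ∈ Mset a b c p q r := by
  have hp0 : p ≠ 0 := by omega
  have hq : 0 < q := lt_of_le_of_lt (Nat.cast_nonneg p) hpq
  have hb' : ∀ n, 0 ≤ b n := fun n => (hb n).le
  have h := isSplit_pos_neg u
  obtain ⟨R, hR, hRneg⟩ := h.exists_En_comb_neg hp0 hpq hr ha hb hc hu hA hpos hneg
  have hswap (s t : ℝ) :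
      (fun n => t * neg u n + s * pos u n) = fun n => s * pos u n + t * neg u n :=
    funext fun n => add_comm _ _
  have hcpt : IsCompact (Icc (0 : ℝ) R ×ˢ Icc (0 : ℝ) R) := isCompact_Icc.prod isCompact_Icc
  obtain ⟨x₀, hx₀, hmax⟩ := hcpt.exists_isMaxOn
    ⟨(0, 0), ⟨left_mem_Icc.2 hR.le, left_mem_Icc.2 hR.le⟩⟩
    (h.continuousOn_En_comb hp0 hpq ha hb' hu hA R)
  obtain ⟨s₀, t₀⟩ := x₀
  obtain ⟨hs₀, ht₀⟩ := hx₀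
  have hmax' : ∀ s ∈ Icc 0 R, ∀ t ∈ Icc 0 R, En a b c p q r (fun n => s * pos u n + t * neg u n)
      ≤ En a b c p q r (fun n => s₀ * pos u n + t₀ * neg u n) :=
    fun s hs t ht => by simpa only [mem_ofPred_eq] using hmax (mk_mem_prod hs ht)
  obtain ⟨hs₀pos, hprs⟩ := h.pr_eq_zero_of_isMaxOn hp hpq ha hb hu hA hpos hR hs₀ ht₀ hmax'
    fun t ht => (hRneg t ht.1).1
  obtain ⟨ht₀pos, hprt⟩ := h.symm.pr_eq_zero_of_isMaxOn hp hpq ha hb hu hA hneg hR ht₀ hs₀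
    (fun t ht s hs => by simpa only [hswap] using hmax' s hs t ht)
    fun s hs => by rw [hswap]; exact (hRneg s hs.1).2
  rw [hswap] at hprt
  refine ⟨s₀, t₀, hs₀pos.le, ht₀pos.le, h.memD_comb hp0 ha hb' hs₀.1 ht₀.1 hq hu hA, ?_, ?_, ?_, ?_⟩
  · rw [pos_comb hs₀.1 ht₀.1]; exact smul_ne_zero_of_ne_zero hs₀pos.ne' hpos
  · rw [neg_comb hs₀.1 ht₀.1]; exact smul_ne_zero_of_ne_zero ht₀pos.ne' hneg
  · rw [pos_comb hs₀.1 ht₀.1, pr_smul_right, hprs, mul_zero]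
  · rw [neg_comb hs₀.1 ht₀.1, pr_smul_right, hprt, mul_zero]

end SignChanging

lemma isGreatest_fiber_of_mem_Mset {p : ℕ} {q r : ℝ} {a b c u : ℤ → ℝ} (hp : 2 ≤ p)
    (hpq : (p : ℝ) < q) (hr : 0 < r) (ha : ∀ n, 0 ≤ a n) (hb : ∀ n, 0 ≤ b n) (hc : ∀ n, 0 ≤ c n)
    (hu : u ∈ Mset a b c p q r) (hA : Summable fun n => c n * |u n| ^ q) :
    IsGreatest {y | ∃ s t : ℝ, 0 ≤ s ∧ 0 ≤ t ∧
      y = En a b c p q r (fun n => s * pos u n + t * neg u n)} (En a b c p q r u) := by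
  have hp0 : p ≠ 0 := by omega
  have hq : 0 < q := lt_of_le_of_lt (Nat.cast_nonneg p) hpq
  have h := isSplit_pos_neg u
  have hKpos : splitK a b p u (pos u) = logSum c q r (pos u) :=
    sub_eq_zero.1 (h.pr_eq hp ha hb hq hu.1 hA ▸ hu.2.2.2.1)
  have hKneg : splitK a b p u (neg u) = logSum c q r (neg u) :=
    sub_eq_zero.1 (h.symm.pr_eq hp ha hb hq hu.1 hA ▸ hu.2.2.2.2)
  refine ⟨⟨1, 1, zero_le_one, zero_le_one, by rw [h.comb_eq_self]⟩, ?_⟩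
  rintro _ ⟨s, t, hs, ht, rfl⟩
  rw [h.En_eq_fiberMap_one hp0 ha hb hq hu.1 hA]
  refine (h.En_comb_le hp0 ha hb hs ht hq hu.1 hA).trans (add_le_add ?_ ?_)
  · rw [← hKpos]
    exact fiberMap_le_fiberMap_one hp0 hpq hr.le (splitK_nonneg ha hb) (cSum_nonneg hc) hs
  · rw [← hKneg]
    exact fiberMap_le_fiberMap_one hp0 hpq hr.le (splitK_nonneg ha hb) (cSum_nonneg hc) ht

theorem mStar_eq {p : ℕ} {q r : ℝ} {a b c : ℤ → ℝ} (hp : 2 ≤ p) (hpq : (p : ℝ) < q) (hr : 0 < r)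
    (ha : ∀ n, 0 ≤ a n) (hb : ∀ n, 0 < b n) (hc : ∀ n, 0 < c n) {b₀ : ℝ} (hb₀ : 0 < b₀)
    (hbb : ∀ n, b₀ ≤ b n) (hcsum : Summable c) :
    mStar a b c p q r
      = sInf {x : ℝ | ∃ u : ℤ → ℝ, memD a b c p q r u ∧ pos u ≠ 0 ∧ neg u ≠ 0 ∧
          x = sSup {y : ℝ | ∃ s t : ℝ, 0 ≤ s ∧ 0 ≤ t ∧
            y = En a b c p q r (fun n => s * pos u n + t * neg u n)}} := by
  have hp0 : p ≠ 0 := by omega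
  have hq : 0 < q := lt_of_le_of_lt (Nat.cast_nonneg p) hpq
  have hb' : ∀ n, 0 ≤ b n := fun n => (hb n).le
  have hA {u : ℤ → ℝ} (hu : memE a b p u) : Summable fun n => c n * |u n| ^ q :=
    summable_c_of_memE hp0 ha hb₀ hbb (fun n => (hc n).le) hcsum hq.le hu
  have key := sInf_image_eq_sInf_image_sSup (S := {u | memD a b c p q r u ∧ pos u ≠ 0 ∧ neg u ≠ 0})
    (N := Mset a b c p q r) (E := En a b c p q r) (F := fun u => {y | ∃ s t : ℝ, 0 ≤ s ∧ 0 ≤ t ∧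
      y = En a b c p q r (fun n => s * pos u n + t * neg u n)}) ?_ ?_ ?_ ?_
  · rw [mStar, key]
    congr 1
    ext x
    simp only [mem_image, mem_ofPred_eq, and_assoc, eq_comm]
  · obtain ⟨u, hfin, hpos, hneg⟩ := exists_sign_changing_of_finite_support
    exact ⟨u, memD_of_finite_support hp0 hq.ne' hfin, hpos, hneg⟩
  · rintro u ⟨hu, hpos, hneg⟩
    have h := isSplit_pos_neg u
    obtain ⟨s₁, hs₁⟩ := h.exists_isMaxOn_fiberMap_splitK hp0 hpq hr ha hb hc hu.1 (hA hu.1) hpos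
    obtain ⟨t₁, ht₁⟩ :=
      h.symm.exists_isMaxOn_fiberMap_splitK hp0 hpq hr ha hb hc hu.1 (hA hu.1) hneg
    refine ⟨⟨fiberMap p q r (splitK a b p u (pos u)) (cSum c q (pos u)) (logSum c q r (pos u)) s₁
      + fiberMap p q r (splitK a b p u (neg u)) (cSum c q (neg u)) (logSum c q r (neg u)) t₁, ?_⟩,
      0, 0, le_rfl, le_rfl, ?_⟩
    · rintro _ ⟨s, t, hs, ht, rfl⟩
      exact (h.En_comb_le hp0 ha hb' hs ht hq hu (hA hu.1)).trans
        (add_le_add (isMaxOn_iff.1 hs₁ s hs) (isMaxOn_iff.1 ht₁ t ht))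
    · simp only [zero_mul, add_zero]
      exact (En_zero hp0 hq.ne').symm
  · rintro u ⟨hu, hpos, hneg⟩
    obtain ⟨s, t, hs, ht, hM⟩ := exists_comb_mem_Mset hp hpq hr ha hb hc hu (hA hu.1) hpos hneg
    exact ⟨_, hM, s, t, hs, ht, rfl⟩
  · intro w hw
    exact ⟨⟨hw.1, hw.2.1, hw.2.2.1⟩,
      isGreatest_fiber_of_mem_Mset hp hpq hr ha hb' (fun n => (hc n).le) hw (hA hw.1.1)⟩

theorem stmt12_general (p : ℕ) (hp2 : 2 ≤ p)
    (q r : ℝ) (hpq : (p : ℝ) < q) (hr : 1 ≤ r)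
    (a b c : ℤ → ℝ)
    (ha : ∀ n, 0 < a n) (hb : ∀ n, 0 < b n) (hc : ∀ n, 0 < c n)
    (b0 : ℝ) (hb0 : 0 < b0) (hbb : ∀ n, b0 ≤ b n)
    (hcsum : Summable c) :
    cStar a b c p q r
        = sInf {x : ℝ | ∃ u : ℤ → ℝ, memD a b c p q r u ∧ u ≠ 0 ∧
            x = sSup {y : ℝ | ∃ t : ℝ, 0 ≤ t ∧
                y = En a b c p q r (fun n => t * u n)}} ∧
      mStar a b c p q r
        = sInf {x : ℝ | ∃ u : ℤ → ℝ, memD a b c p q r u ∧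
            pos u ≠ 0 ∧ neg u ≠ 0 ∧
            x = sSup {y : ℝ | ∃ s t : ℝ, 0 ≤ s ∧ 0 ≤ t ∧
                y = En a b c p q r (fun n => s * pos u n + t * neg u n)}} :=
  ⟨cStar_eq hp2 hpq (by linarith) (fun n => (ha n).le) hb hc hb0 hbb hcsum,
    mStar_eq hp2 hpq (by linarith) (fun n => (ha n).le) hb hc hb0 hbb hcsum⟩

theorem stmt12 (p : ℕ) (hp2 : 2 ≤ p) (hpe : Even p)
    (q r : ℝ) (hpq : (p : ℝ) < q) (hr : 1 ≤ r)
    (a b c : ℤ → ℝ)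
    (ha : ∀ n, 0 < a n) (hb : ∀ n, 0 < b n) (hc : ∀ n, 0 < c n)
    (b0 : ℝ) (hb0 : 0 < b0) (hbb : ∀ n, b0 ≤ b n)
    (hbinf : Tendsto b cofinite atTop)
    (c0 : ℝ) (hc0 : 0 < c0) (hcc : ∀ n, c n ≤ c0)
    (hcsum : Summable c) :
    cStar a b c p q r
        = sInf {x : ℝ | ∃ u : ℤ → ℝ, memD a b c p q r u ∧ u ≠ 0 ∧
            x = sSup {y : ℝ | ∃ t : ℝ, 0 ≤ t ∧
                y = En a b c p q r (fun n => t * u n)}} ∧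
      mStar a b c p q r
        = sInf {x : ℝ | ∃ u : ℤ → ℝ, memD a b c p q r u ∧
            pos u ≠ 0 ∧ neg u ≠ 0 ∧
            x = sSup {y : ℝ | ∃ s t : ℝ, 0 ≤ s ∧ 0 ≤ t ∧
                y = En a b c p q r (fun n => s * pos u n + t * neg u n)}} :=
  stmt12_general p hp2 q r hpq hr a b c ha hb hc b0 hb0 hbb hcsum

end DPLap
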